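/- arXiv:1312.0577 — 3 statements merged into one kernel-verified Lean document; each statement's English description precedes it below -/
import Mathlib

section
/- Let n ∈ ℕ, λ > 0, let A be a real symmetric n×n matrix with A ≥ λ I_n or −A ≥ λ I_n (in the sense of quadratic forms, i.e. ⟨u, Au⟩ ≥ λ‖u‖² for all u, respectively ⟨u, −Au⟩ ≥ λ‖u‖² for all u), and let B be a real antisymmetric n×n matrix (Bᵀ = −B). Then the real symmetric 2n×2n block matrix h̃ = [[A, B],[−B, −A]] has no eigenvalue in the open interval (−λ, λ): every eigenvalue E of h̃ satisfies |E| ≥ λ. -/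
/-!
Let `J = diag(I, -I)`. Then `J h̃ = [[A, B], [B, A]]`, whose quadratic form is that of `A ⊕ A`
because `B` is antisymmetric, so it is bounded below by `λ‖w‖²`. If `h̃ v = E v` with
`v = a + i b` complex, then since `h̃` is real and `J` symmetric,
`⟨a, J h̃ a⟩ + ⟨b, J h̃ b⟩ = Re E · (⟨a, J a⟩ + ⟨b, J b⟩)`; the left side is at least
`λ(‖a‖² + ‖b‖²)` and the right side at most `|Re E| (‖a‖² + ‖b‖²)`. The case `-A ≥ λ` follows
by applying this to `-h̃`, which has the same block shape with `-A`, `-B` in place of `A`, `B`.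
-/

open Matrix

section BlockForms

variable {m R : Type*} [Fintype m]

theorem dotProduct_self_nonneg [Ring R] [LinearOrder R] [IsStrictOrderedRing R] (x : m → R) :
    0 ≤ x ⬝ᵥ x :=
  Finset.sum_nonneg fun i _ => mul_self_nonneg (x i)

theorem sumElim_dotProduct_fromBlocks_mulVec_sumElim [CommRing R] (A : Matrix m m R)
    {B : Matrix m m R} (hB : Bᵀ = -B) (x y : m → R) :
    Sum.elim x y ⬝ᵥ fromBlocks A B B A *ᵥ Sum.elim x y = x ⬝ᵥ A *ᵥ x + y ⬝ᵥ A *ᵥ y := by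
  have hBxy : y ⬝ᵥ B *ᵥ x = -(x ⬝ᵥ B *ᵥ y) := by
    rw [← dotProduct_transpose_mulVec, hB, neg_mulVec, dotProduct_neg]
  rw [fromBlocks_mulVec, Sum.elim_comp_inl, Sum.elim_comp_inr, sumElim_dotProduct_sumElim,
    dotProduct_add, dotProduct_add, hBxy]
  ring

variable [DecidableEq m]

theorem fromBlocks_one_zero_zero_neg_one_mul [Ring R] (A B : Matrix m m R) :
    fromBlocks 1 0 0 (-1) * fromBlocks A B (-B) (-A) = fromBlocks A B B A := by
  simp [fromBlocks_multiply]

theorem abs_sumElim_dotProduct_fromBlocks_one_zero_zero_neg_one_mulVec_sumElim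
    [CommRing R] [LinearOrder R] [IsStrictOrderedRing R] (x y : m → R) :
    |Sum.elim x y ⬝ᵥ fromBlocks 1 0 0 (-1) *ᵥ Sum.elim x y| ≤ Sum.elim x y ⬝ᵥ Sum.elim x y := by
  simp only [fromBlocks_mulVec, Sum.elim_comp_inl, Sum.elim_comp_inr, one_mulVec, zero_mulVec,
    add_zero, zero_add, neg_mulVec, sumElim_dotProduct_sumElim, dotProduct_neg]
  have hx := dotProduct_self_nonneg x
  have hy := dotProduct_self_nonneg y
  rw [abs_le]
  constructor <;> linarith

end BlockForms

section RealParts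

variable {n : Type*} [Fintype n] {M : Matrix n n ℝ} {E : ℂ} {v : n → ℂ}

theorem mulVec_re_of_map_ofReal_mulVec_eq_smul (hE : M.map Complex.ofReal *ᵥ v = E • v) :
    M *ᵥ (Complex.re ∘ v) = E.re • (Complex.re ∘ v) - E.im • (Complex.im ∘ v) := by
  funext i
  have := congrArg Complex.re (congrFun hE i)
  simpa [mulVec, dotProduct, Complex.re_sum] using this

theorem mulVec_im_of_map_ofReal_mulVec_eq_smul (hE : M.map Complex.ofReal *ᵥ v = E • v) :
    M *ᵥ (Complex.im ∘ v) = E.im • (Complex.re ∘ v) + E.re • (Complex.im ∘ v) := by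
  funext i
  have := congrArg Complex.im (congrFun hE i)
  simpa [mulVec, dotProduct, Complex.im_sum, add_comm] using this

theorem re_dotProduct_add_im_dotProduct_mul_mulVec {S : Matrix n n ℝ} (hS : Sᵀ = S)
    (hE : M.map Complex.ofReal *ᵥ v = E • v) :
    (Complex.re ∘ v) ⬝ᵥ (S * M) *ᵥ (Complex.re ∘ v)
        + (Complex.im ∘ v) ⬝ᵥ (S * M) *ᵥ (Complex.im ∘ v)
      = E.re * ((Complex.re ∘ v) ⬝ᵥ S *ᵥ (Complex.re ∘ v)
        + (Complex.im ∘ v) ⬝ᵥ S *ᵥ (Complex.im ∘ v)) := by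
  have hSym : (Complex.im ∘ v) ⬝ᵥ S *ᵥ (Complex.re ∘ v)
      = (Complex.re ∘ v) ⬝ᵥ S *ᵥ (Complex.im ∘ v) := by
    rw [← dotProduct_transpose_mulVec, hS]
  rw [← mulVec_mulVec, ← mulVec_mulVec, mulVec_re_of_map_ofReal_mulVec_eq_smul hE,
    mulVec_im_of_map_ofReal_mulVec_eq_smul hE]
  simp only [mulVec_sub, mulVec_add, mulVec_smul, dotProduct_sub, dotProduct_add, dotProduct_smul,
    smul_eq_mul, hSym]
  ring

theorem re_dotProduct_add_im_dotProduct_pos (hv : v ≠ 0) :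
    0 < (Complex.re ∘ v) ⬝ᵥ (Complex.re ∘ v) + (Complex.im ∘ v) ⬝ᵥ (Complex.im ∘ v) := by
  have hre := dotProduct_self_nonneg (Complex.re ∘ v)
  have him := dotProduct_self_nonneg (Complex.im ∘ v)
  by_contra! h
  refine hv (funext fun i => Complex.ext ?_ ?_)
  · exact congrFun (dotProduct_self_eq_zero.mp (by linarith : Complex.re ∘ v ⬝ᵥ _ = 0)) i
  · exact congrFun (dotProduct_self_eq_zero.mp (by linarith : Complex.im ∘ v ⬝ᵥ _ = 0)) i

end RealParts

theorem le_abs_re_of_fromBlocks_mulVec_eq_smul {m : Type*} [Fintype m] [DecidableEq m]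
    {lam : ℝ} {A B : Matrix m m ℝ} (hA : ∀ u : m → ℝ, lam * (u ⬝ᵥ u) ≤ u ⬝ᵥ A *ᵥ u) (hB : Bᵀ = -B)
    {E : ℂ} {v : m ⊕ m → ℂ} (hv : v ≠ 0)
    (hE : (fromBlocks A B (-B) (-A)).map Complex.ofReal *ᵥ v = E • v) :
    lam ≤ |E.re| := by
  set a := Complex.re ∘ v
  set b := Complex.im ∘ v
  set J : Matrix (m ⊕ m) (m ⊕ m) ℝ := fromBlocks 1 0 0 (-1)
  have hJ : Jᵀ = J := by simp [J, fromBlocks_transpose]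
  have hform (w : m ⊕ m → ℝ) : lam * (w ⬝ᵥ w) ≤ w ⬝ᵥ (J * fromBlocks A B (-B) (-A)) *ᵥ w := by
    rw [← Sum.elim_comp_inl_inr w, fromBlocks_one_zero_zero_neg_one_mul,
      sumElim_dotProduct_fromBlocks_mulVec_sumElim _ hB, sumElim_dotProduct_sumElim]
    linarith [hA (w ∘ Sum.inl), hA (w ∘ Sum.inr)]
  have hJle (w : m ⊕ m → ℝ) : |w ⬝ᵥ J *ᵥ w| ≤ w ⬝ᵥ w := by
    rw [← Sum.elim_comp_inl_inr w]
    exact abs_sumElim_dotProduct_fromBlocks_one_zero_zero_neg_one_mulVec_sumElim _ _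
  refine le_of_mul_le_mul_right ?_ (re_dotProduct_add_im_dotProduct_pos hv)
  calc lam * (a ⬝ᵥ a + b ⬝ᵥ b) = lam * (a ⬝ᵥ a) + lam * (b ⬝ᵥ b) := mul_add _ _ _
    _ ≤ a ⬝ᵥ (J * fromBlocks A B (-B) (-A)) *ᵥ a + b ⬝ᵥ (J * fromBlocks A B (-B) (-A)) *ᵥ b :=
      add_le_add (hform a) (hform b)
    _ = E.re * (a ⬝ᵥ J *ᵥ a + b ⬝ᵥ J *ᵥ b) := re_dotProduct_add_im_dotProduct_mul_mulVec hJ hE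
    _ ≤ |E.re| * |a ⬝ᵥ J *ᵥ a + b ⬝ᵥ J *ᵥ b| := by rw [← abs_mul]; exact le_abs_self _
    _ ≤ |E.re| * (a ⬝ᵥ a + b ⬝ᵥ b) := by
      gcongr
      exact (abs_add_le _ _).trans (add_le_add (hJle a) (hJle b))

theorem block_matrix_spectral_gap_general (n : ℕ) (lam : ℝ)
    (A B : Matrix (Fin n) (Fin n) ℝ)
    (hAbdd : (∀ u : Fin n → ℝ, lam * (u ⬝ᵥ u) ≤ u ⬝ᵥ A.mulVec u) ∨
             (∀ u : Fin n → ℝ, lam * (u ⬝ᵥ u) ≤ u ⬝ᵥ (-A).mulVec u))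
    (hB : Bᵀ = -B) :
    ∀ E : ℂ, ∀ v : (Fin n ⊕ Fin n) → ℂ, v ≠ 0 →
      ((Matrix.fromBlocks A B (-B) (-A)).map (fun x : ℝ => (x : ℂ))).mulVec v = E • v →
      lam ≤ ‖E‖ := by
  intro E v hv hE
  refine le_trans ?_ (Complex.abs_re_le_norm E)
  rcases hAbdd with hA | hA
  · exact le_abs_re_of_fromBlocks_mulVec_eq_smul hA hB hv hE
  · have hE' : (fromBlocks (-A) (-B) (-(-B)) (-(-A))).map Complex.ofReal *ᵥ v = (-E) • v := by
      rw [← fromBlocks_neg, Matrix.map_neg _ Complex.ofReal_neg, neg_mulVec, neg_smul]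
      exact congrArg Neg.neg hE
    simpa using le_abs_re_of_fromBlocks_mulVec_eq_smul hA (by rw [transpose_neg, hB]) hv hE'

/-- If `A` is real symmetric with `A ≥ λ` or `−A ≥ λ` (as quadratic
forms, `λ > 0`) and `B` is real antisymmetric, then every eigenvalue `E` of the symmetric
block matrix `h̃ = [[A,B],[−B,−A]]` satisfies `|E| ≥ λ`. -/
theorem block_matrix_spectral_gap (n : ℕ) (lam : ℝ) (hlam : 0 < lam)
    (A B : Matrix (Fin n) (Fin n) ℝ)
    (hA : A.IsSymm)
    (hAbdd : (∀ u : Fin n → ℝ, lam * (u ⬝ᵥ u) ≤ u ⬝ᵥ A.mulVec u) ∨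
             (∀ u : Fin n → ℝ, lam * (u ⬝ᵥ u) ≤ u ⬝ᵥ (-A).mulVec u))
    (hB : Bᵀ = -B) :
    ∀ E : ℂ, ∀ v : (Fin n ⊕ Fin n) → ℂ, v ≠ 0 →
      ((Matrix.fromBlocks A B (-B) (-A)).map (fun x : ℝ => (x : ℂ))).mulVec v = E • v →
      lam ≤ ‖E‖ :=
  block_matrix_spectral_gap_general n lam A B hAbdd hB
end

section
/- Let n ∈ ℕ and let h_n^{Ising} be the effective one-particle Hamiltonian of the Ising chain, i.e. the 2n×2n block Jacobi matrix h_n with μ_j = 1 and γ_j = 1 for all j and real field values ν_1,…,ν_n. Let U = (1/√2)[[1,1],[1,−1]] (so U = U^{−1}) and let 𝒰 be the block diagonal 2n×2n matrix ⊕_{j=1}^n U. Then 𝒰 h_n^{Ising} 𝒰^{−1} equals the tridiagonal 2n×2n Jacobi matrix with zero diagonal and off-diagonal entries, in order, ν_1, −2, ν_2, −2, …, −2, ν_n; that is, its (2j−1, 2j) and (2j, 2j−1) entries equal ν_j for 1 ≤ j ≤ n, its (2j, 2j+1) and (2j+1, 2j) entries equal −2 for 1 ≤ j ≤ n−1, and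 all other entries vanish. -/
open scoped Matrix ComplexOrder
open MeasureTheory ProbabilityTheory

noncomputable section

/-- operator norm of a matrix, viewed as an operator on Euclidean space -/
def opNorm {𝕜 : Type*} [RCLike 𝕜] {m : Type*} [Fintype m] [DecidableEq m]
    (M : Matrix m m 𝕜) : ℝ :=
  ‖(Matrix.toEuclideanLin M).toContinuousLinearMap‖

/-- Pauli matrices -/
def σX : Matrix (Fin 2) (Fin 2) ℂ := !![0, 1; 1, 0]
def σY : Matrix (Fin 2) (Fin 2) ℂ := !![0, -Complex.I; Complex.I, 0]
def σZ : Matrix (Fin 2) (Fin 2) ℂ := !![1, 0; 0, -1]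

/-- the operator on `⊗_{i=1}^n ℂ²` acting as the `2×2` matrix `a` in the `j`-th factor
(0-based) and as the identity in all other factors; the identity if `j ≥ n`. -/
def localOp (n j : ℕ) (a : Matrix (Fin 2) (Fin 2) ℂ) :
    Matrix (Fin n → Fin 2) (Fin n → Fin 2) ℂ :=
  Matrix.of fun f g =>
    if h : j < n then
      (if ∀ i, i ≠ ⟨j, h⟩ → f i = g i then a (f ⟨j, h⟩) (g ⟨j, h⟩) else 0)
    else (if f = g then 1 else 0)

/-- `A ∈ 𝒜_j` : `A` acts only on the `j`-th spin (0-based `j`). -/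
def IsLocalAt (n j : ℕ) (A : Matrix (Fin n → Fin 2) (Fin n → Fin 2) ℂ) : Prop :=
  ∃ a : Matrix (Fin 2) (Fin 2) ℂ, A = localOp n j a

/-- XY chain Hamiltonian; the coefficients `μ γ ν : ℕ → ℝ` are 0-based
(`μ 0` is the paper's `μ_1`, etc.). -/
def XYHam (n : ℕ) (μ γ ν : ℕ → ℝ) :
    Matrix (Fin n → Fin 2) (Fin n → Fin 2) ℂ :=
  (∑ j ∈ Finset.range (n - 1), (μ j : ℂ) •
      (((1 + γ j : ℝ) : ℂ) • (localOp n j σX * localOp n (j+1) σX)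
        + ((1 - γ j : ℝ) : ℂ) • (localOp n j σY * localOp n (j+1) σY)))
  + ∑ j ∈ Finset.range n, (ν j : ℂ) • localOp n j σZ

/-- Heisenberg dynamics `τ_t(A) = e^{itH} A e^{-itH}` -/
def heis {m : Type*} [Fintype m] [DecidableEq m] (H A : Matrix m m ℂ) (t : ℝ) :
    Matrix m m ℂ :=
  NormedSpace.exp ((Complex.I * t) • H) * A * NormedSpace.exp (-(Complex.I * t) • H)

def Jmat : Matrix (Fin 2) (Fin 2) ℂ := !![1, 0; 0, -1]
def Smat (γ : ℝ) : Matrix (Fin 2) (Fin 2) ℂ := !![1, (γ : ℂ); (-γ : ℝ), -1]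

/-- effective one-particle Hamiltonian `h_n`, a `2n×2n` block Jacobi matrix,
indexed by `Fin n × Fin 2`; coefficients 0-based. -/
def effHam (n : ℕ) (μ γ ν : ℕ → ℝ) :
    Matrix (Fin n × Fin 2) (Fin n × Fin 2) ℂ :=
  Matrix.of fun p q =>
    if p.1 = q.1 then (ν p.1 : ℂ) * Jmat p.2 q.2
    else if (q.1 : ℕ) = p.1 + 1 then -(μ p.1 : ℂ) * Smat (γ p.1) p.2 q.2
    else if (p.1 : ℕ) = q.1 + 1 then -(μ q.1 : ℂ) * (Smat (γ q.1))ᵀ p.2 q.2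
    else 0

/-- the `(j,k)`-th `2×2` block of a `2n×2n` matrix -/
def blockEntry {n : ℕ} (M : Matrix (Fin n × Fin 2) (Fin n × Fin 2) ℂ) (j k : Fin n) :
    Matrix (Fin 2) (Fin 2) ℂ :=
  Matrix.of fun a b => M (j, a) (k, b)

/-- `f(M)` for a Hermitian matrix `M` via the spectral theorem (junk value `0` in the
impossible case that `M` is not Hermitian). -/
def matFun {m : Type*} [Fintype m] [DecidableEq m] (f : ℝ → ℂ) (M : Matrix m m ℂ) :
    Matrix m m ℂ :=
  if h : M.IsHermitian then
    (h.eigenvectorUnitary : Matrix m m ℂ) * Matrix.diagonal (fun i => f (h.eigenvalues i))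
      * (star h.eigenvectorUnitary : Matrix m m ℂ)
  else 0

end

/-- the `2×2` Hadamard-type unitary `U = (1/√2)[[1,1],[1,−1]]` -/
noncomputable def U2 : Matrix (Fin 2) (Fin 2) ℂ :=
  ((Real.sqrt 2 : ℝ) : ℂ)⁻¹ • !![1, 1; 1, -1]

/-!
Under `Matrix.comp`, a `(Fin n × Fin 2)`-indexed matrix is an `n × n` matrix of `2 × 2` blocks,
and `𝒰` is the diagonal block matrix with blocks `U`. Conjugating by it therefore acts blockwise,
`B_{jk} ↦ U B_{jk} U`, and for the Ising blocks one computes `U J U = σˣ`,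
`U S(1) U = 2 E₂₁` and `U S(1)ᵀ U = 2 E₁₂`.
-/

namespace Matrix

variable {I J R : Type*}

theorem comp_diagonal_const_apply [DecidableEq I] [Zero R] (A : Matrix J J R) (p q : I × J) :
    comp I I J J R (diagonal fun _ => A) p q = if p.1 = q.1 then A p.2 q.2 else 0 := by
  simp only [comp_apply, diagonal_apply]
  split_ifs <;> rfl

theorem comp_diagonal_const_mul [Fintype I] [Fintype J] [DecidableEq I] [Semiring R]
    (A B : Matrix J J R) :
    comp I I J J R (diagonal fun _ => A) * comp I I J J R (diagonal fun _ => B) =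
      comp I I J J R (diagonal fun _ => A * B) := by
  simp only [← compRingEquiv_apply, ← map_mul, diagonal_mul_diagonal]

theorem comp_diagonal_const_mul_mul_apply [Fintype I] [Fintype J] [DecidableEq I] [Semiring R]
    (A B : Matrix J J R) (M : Matrix (I × J) (I × J) R) (i k : I) (a b : J) :
    (comp I I J J R (diagonal fun _ => A) * M * comp I I J J R (diagonal fun _ => B))
        (i, a) (k, b) = (A * (comp I I J J R).symm M i k * B) a b := by
  rw [← (comp I I J J R).apply_symm_apply M]
  simp only [← compRingEquiv_apply, ← map_mul]
  simp

end Matrix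

open Matrix

theorem U2_mul_mul_U2 (X : Matrix (Fin 2) (Fin 2) ℂ) :
    U2 * X * U2 = (2⁻¹ : ℂ) •
      !![X 0 0 + X 0 1 + X 1 0 + X 1 1, X 0 0 - X 0 1 + X 1 0 - X 1 1;
         X 0 0 + X 0 1 - X 1 0 - X 1 1, X 0 0 - X 0 1 - X 1 0 + X 1 1] := by
  have h : ((Real.sqrt 2 : ℝ) : ℂ)⁻¹ * ((Real.sqrt 2 : ℝ) : ℂ)⁻¹ = 2⁻¹ := by
    rw [← mul_inv, ← Complex.ofReal_mul, Real.mul_self_sqrt zero_le_two]; norm_num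
  conv_lhs => rw [eta_fin_two X]
  simp only [U2, Matrix.smul_mul, Matrix.mul_smul, smul_smul, h, mul_fin_two]
  congr 2
  ring_nf

theorem U2_mul_self : U2 * U2 = 1 := calc
  U2 * U2 = U2 * 1 * U2 := by rw [mul_one]
  _ = 1 := by
    rw [U2_mul_mul_U2]
    ext i j; fin_cases i <;> fin_cases j <;> norm_num

theorem U2_mul_Jmat_mul_U2 : U2 * Jmat * U2 = !![0, 1; 1, 0] := by
  rw [U2_mul_mul_U2]
  ext i j; fin_cases i <;> fin_cases j <;> norm_num [Jmat]

theorem U2_mul_Smat_one_mul_U2 : U2 * Smat 1 * U2 = !![0, 0; 2, 0] := by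
  rw [U2_mul_mul_U2]
  ext i j; fin_cases i <;> fin_cases j <;> norm_num [Smat]

theorem U2_mul_Smat_one_transpose_mul_U2 : U2 * (Smat 1)ᵀ * U2 = !![0, 2; 0, 0] := by
  rw [U2_mul_mul_U2]
  ext i j; fin_cases i <;> fin_cases j <;> norm_num [Smat]

theorem comp_symm_effHam (n : ℕ) (μ γ ν : ℕ → ℝ) (j k : Fin n) :
    (comp (Fin n) (Fin n) (Fin 2) (Fin 2) ℂ).symm (effHam n μ γ ν) j k =
      if j = k then (ν j : ℂ) • Jmat
      else if (k : ℕ) = j + 1 then -(μ j : ℂ) • Smat (γ j)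
      else if (j : ℕ) = k + 1 then -(μ k : ℂ) • (Smat (γ k))ᵀ
      else 0 := by
  ext a b
  simp only [comp_symm_apply, effHam, of_apply]
  split_ifs <;> simp

theorem comp_diagonal_U2_mul_isingEffHam_mul_apply (n : ℕ) (ν : ℕ → ℝ) (j k : Fin n)
    (a b : Fin 2) :
    (comp (Fin n) (Fin n) (Fin 2) (Fin 2) ℂ (diagonal fun _ => U2) *
        effHam n (fun _ => 1) (fun _ => 1) ν *
        comp (Fin n) (Fin n) (Fin 2) (Fin 2) ℂ (diagonal fun _ => U2)) (j, a) (k, b) =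
      (if j = k then (ν j : ℂ) • !![0, 1; 1, 0]
        else if (k : ℕ) = j + 1 then -!![0, 0; 2, 0]
        else if (j : ℕ) = k + 1 then -!![0, 2; 0, 0]
        else 0) a b := by
  rw [comp_diagonal_const_mul_mul_apply, comp_symm_effHam]
  split_ifs <;>
    simp [U2_mul_Jmat_mul_U2, U2_mul_Smat_one_mul_U2, U2_mul_Smat_one_transpose_mul_U2]

/-- Conjugating the effective one-particle Hamiltonian of the Ising
chain (`μ_j = γ_j = 1`) by `𝒰 = ⊕_j U` yields the tridiagonal Jacobi matrix with zero
diagonal and off-diagonal entries `ν_1, −2, ν_2, −2, …, −2, ν_n`. -/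
theorem ising_effective_hamiltonian_transform (n : ℕ) (ν : ℕ → ℝ) :
    U2 = U2⁻¹ ∧
    (Matrix.of fun p q : Fin n × Fin 2 => if p.1 = q.1 then U2 p.2 q.2 else 0) *
        effHam n (fun _ => 1) (fun _ => 1) ν *
        (Matrix.of fun p q : Fin n × Fin 2 => if p.1 = q.1 then U2 p.2 q.2 else 0)⁻¹
      = Matrix.of fun p q : Fin n × Fin 2 =>
          if p.1 = q.1 ∧ p.2 ≠ q.2 then (ν p.1 : ℂ)
          else if (q.1 : ℕ) = p.1 + 1 ∧ p.2 = 1 ∧ q.2 = 0 then -2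
          else if (p.1 : ℕ) = q.1 + 1 ∧ p.2 = 0 ∧ q.2 = 1 then -2
          else 0 := by
  set 𝒰 := comp (Fin n) (Fin n) (Fin 2) (Fin 2) ℂ (diagonal fun _ => U2)
  have h𝒰 : (Matrix.of fun p q : Fin n × Fin 2 => if p.1 = q.1 then U2 p.2 q.2 else 0) = 𝒰 :=
    Matrix.ext fun p q => (comp_diagonal_const_apply U2 p q).symm
  have h𝒰_inv : 𝒰⁻¹ = 𝒰 :=
    inv_eq_right_inv (by rw [comp_diagonal_const_mul, U2_mul_self, diagonal_one, comp_one])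
  refine ⟨(inv_eq_right_inv U2_mul_self).symm, ?_⟩
  rw [h𝒰, h𝒰_inv]
  ext ⟨j, a⟩ ⟨k, b⟩
  rw [comp_diagonal_U2_mul_isingEffHam_mul_apply, of_apply]
  by_cases hjk : j = k
  · subst hjk
    fin_cases a <;> fin_cases b <;> simp
  by_cases hkj : (k : ℕ) = j + 1
  · have hjk' : (j : ℕ) ≠ k + 1 := by omega
    fin_cases a <;> fin_cases b <;> simp [hjk, eq_true hkj, hjk']
  by_cases hjk' : (j : ℕ) = k + 1
  · fin_cases a <;> fin_cases b <;> simp [hjk, hkj, eq_true hjk']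
  simp [hjk, hkj, hjk']
end

section
/- Let m, k ∈ ℕ, let ψ ∈ ℂ^m ⊗ ℂ^k be a unit vector and let P = |ψ⟩⟨ψ| be the orthogonal projection onto ℂψ. Then the von Neumann entropy of the reduced density matrix P¹ = Tr_2[P] is bounded by the logarithmic negativity of P: S(P¹) ≤ log ‖P^{T_1}‖_1. -/
/-!
Write `ψ = ∑ A i α • eᵢ ⊗ e_α`. Then `P¹ = A Aᴴ`, and `(P^{T₁})ᴴ P^{T₁} = (A Aᴴ)ᵀ ⊗ (Aᴴ A)ᵀ`, so the
singular values of `P^{T₁}` are the numbers `√(λᵢ μⱼ)` with `λ`, `μ` the spectra of `A Aᴴ` and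
`Aᴴ A`. These two spectra agree away from `0`, hence `‖P^{T₁}‖₁ = (∑ √λᵢ)²`. What remains is the
scalar inequality `-∑ λᵢ log λᵢ ≤ 2 log ∑ √λᵢ` for a probability vector `λ`, which is Jensen's
inequality for the logarithm, here in the form `log x ≤ x - 1`.
-/
noncomputable section

/-- the von Neumann entropy `S(ρ) = −Σ λ_ℓ log λ_ℓ` of a Hermitian matrix, via its
eigenvalues (junk value `0` if `ρ` is not Hermitian; note `Real.log 0 = 0`, which encodes
the convention `0 log 0 = 0`). -/
def vnEntropy {m : Type*} [Fintype m] [DecidableEq m] (ρ : Matrix m m ℂ) : ℝ :=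
  if h : ρ.IsHermitian then -∑ i, h.eigenvalues i * Real.log (h.eigenvalues i) else 0

/-- the trace norm `‖M‖₁ = Tr √(M^* M)`, the sum of the singular values of `M` -/
def traceNorm {m : Type*} [Fintype m] [DecidableEq m] (M : Matrix m m ℂ) : ℝ :=
  ∑ i, Real.sqrt ((Matrix.isHermitian_conjTranspose_mul_self M).eigenvalues i)

/-- the partial trace over the second tensor factor -/
def ptrace2 {m k : Type*} [Fintype m] [Fintype k]
    (M : Matrix (m × k) (m × k) ℂ) : Matrix m m ℂ :=
  Matrix.of fun i j => ∑ α, M (i, α) (j, α)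

/-- the partial transpose in the first tensor factor -/
def ptranspose {m k : Type*} (M : Matrix (m × k) (m × k) ℂ) : Matrix (m × k) (m × k) ℂ :=
  Matrix.of fun p q => M (q.1, p.2) (p.1, q.2)

end

open Matrix Polynomial
open scoped Kronecker ComplexOrder

namespace Matrix.IsHermitian

variable {𝕜 : Type*} [RCLike 𝕜] {n m : Type*} [Fintype n] [DecidableEq n] [Fintype m]
  [DecidableEq m] {A : Matrix n n 𝕜} {B : Matrix m m 𝕜}

lemma sum_comp_eigenvalues_eq_sum_roots_charpoly (hA : A.IsHermitian) (f : ℝ → ℝ) :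
    ∑ i, f (hA.eigenvalues i) = (A.charpoly.roots.map fun z => f (RCLike.re z)).sum := by
  rw [hA.roots_charpoly_eq_eigenvalues, Multiset.map_map]
  simp only [Function.comp_def, RCLike.ofReal_re]
  rfl

lemma sum_comp_eigenvalues_eq_of_charpoly_eq_prod {ι : Type*} [Fintype ι] (hA : A.IsHermitian)
    (d : ι → ℝ) (h : A.charpoly = ∏ i, (X - C (d i : 𝕜))) (f : ℝ → ℝ) :
    ∑ i, f (hA.eigenvalues i) = ∑ i, f (d i) := by
  have hprod : ∏ i, (X - C (d i : 𝕜)) = ((Finset.univ.val.map fun i => (d i : 𝕜)).map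
      fun a => X - C a).prod := by
    rw [Multiset.map_map]; rfl
  rw [sum_comp_eigenvalues_eq_sum_roots_charpoly, h, hprod, roots_multiset_prod_X_sub_C,
    Multiset.map_map]
  simp only [Function.comp_def, RCLike.ofReal_re]
  rfl

lemma sum_comp_eigenvalues_eq_of_X_pow_mul_charpoly_eq (hA : A.IsHermitian) (hB : B.IsHermitian)
    {f : ℝ → ℝ} (hf : f 0 = 0)
    (h : X ^ Fintype.card m * A.charpoly = X ^ Fintype.card n * B.charpoly) :
    ∑ i, f (hA.eigenvalues i) = ∑ j, f (hB.eigenvalues j) := by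
  have hroots := congrArg (fun p => (p.roots.map fun z => f (RCLike.re z)).sum) h
  simp only [roots_mul (mul_ne_zero (pow_ne_zero _ X_ne_zero) (charpoly_monic _).ne_zero),
    roots_X_pow, Multiset.map_add, Multiset.sum_add, Multiset.map_nsmul, Multiset.sum_nsmul,
    Multiset.map_singleton, Multiset.sum_singleton, map_zero, hf, smul_zero, zero_add] at hroots
  simpa only [sum_comp_eigenvalues_eq_sum_roots_charpoly] using hroots

lemma eigenvalues_transpose (hA : A.IsHermitian) : hA.transpose.eigenvalues = hA.eigenvalues :=
  (eigenvalues_eq_eigenvalues_iff _ _).mpr (charpoly_transpose A)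

lemma charpoly_kronecker (hA : A.IsHermitian) (hB : B.IsHermitian) :
    (A ⊗ₖ B).charpoly =
      ∏ p : n × m, (X - C ((hA.eigenvalues p.1 * hB.eigenvalues p.2 : ℝ) : 𝕜)) := by
  set U : Matrix n n 𝕜 := (hA.eigenvectorUnitary : Matrix n n 𝕜)
  set V : Matrix m m 𝕜 := (hB.eigenvectorUnitary : Matrix m m 𝕜)
  have hU : star U * U = 1 := Unitary.coe_star_mul_self hA.eigenvectorUnitary
  have hV : star V * V = 1 := Unitary.coe_star_mul_self hB.eigenvectorUnitary
  conv_lhs => rw [hA.spectral_theorem, hB.spectral_theorem]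
  rw [Unitary.conjStarAlgAut_apply,
    Unitary.conjStarAlgAut_apply, mul_kronecker_mul, mul_kronecker_mul, charpoly_mul_comm,
    ← mul_assoc, ← mul_kronecker_mul, hU, hV, one_kronecker_one, one_mul,
    diagonal_kronecker_diagonal, charpoly_diagonal]
  simp

end Matrix.IsHermitian

lemma Matrix.sum_comp_eigenvalues_mul_conjTranspose_self {𝕜 : Type*} [RCLike 𝕜]
    {n m : Type*} [Fintype n] [DecidableEq n] [Fintype m] [DecidableEq m] (A : Matrix n m 𝕜)
    {f : ℝ → ℝ} (hf : f 0 = 0) :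
    ∑ i, f ((isHermitian_mul_conjTranspose_self A).eigenvalues i)
      = ∑ j, f ((isHermitian_conjTranspose_mul_self A).eigenvalues j) :=
  IsHermitian.sum_comp_eigenvalues_eq_of_X_pow_mul_charpoly_eq _ _ hf (charpoly_mul_comm' A Aᴴ)

lemma neg_sum_mul_log_le_two_mul_log_sum_sqrt {ι : Type*} [Fintype ι] {p : ι → ℝ}
    (hp₀ : ∀ i, 0 ≤ p i) (hp₁ : ∑ i, p i = 1) :
    -∑ i, p i * Real.log (p i) ≤ 2 * Real.log (∑ i, √(p i)) := by
  set s := ∑ i, √(p i)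
  have hs : 0 < s := by
    obtain ⟨i, hi⟩ : ∃ i, p i ≠ 0 := by
      by_contra! h
      simp [h] at hp₁
    exact (Real.sqrt_pos.mpr ((hp₀ i).lt_of_ne' hi)).trans_le
      (Finset.single_le_sum (fun j _ => Real.sqrt_nonneg (p j)) (Finset.mem_univ i))
  -- `log x ≤ x - 1` at `x = 1 / (s √(p i))`, weighted by `p i`
  have hterm : ∀ i, p i * (-(Real.log (p i) / 2) - Real.log s) ≤ √(p i) / s - p i := by
    intro i
    rcases (hp₀ i).eq_or_lt with hi | hi
    · simp [← hi]
    have hsqrt : 0 < √(p i) := Real.sqrt_pos.mpr hi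
    have hlog := Real.log_le_sub_one_of_pos (inv_pos.mpr (mul_pos hs hsqrt))
    rw [Real.log_inv, Real.log_mul hs.ne' hsqrt.ne', Real.log_sqrt hi.le] at hlog
    have hpi : p i * (s * √(p i))⁻¹ = √(p i) / s := by
      field_simp
      rw [Real.sq_sqrt hi.le]
    nlinarith [mul_le_mul_of_nonneg_left hlog hi.le]
  have hsum := Finset.sum_le_sum fun i (_ : i ∈ Finset.univ) => hterm i
  have hlhs : ∑ i, p i * (-(Real.log (p i) / 2) - Real.log s)
      = -(∑ i, p i * Real.log (p i)) / 2 - Real.log s := by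
    simp only [mul_sub, Finset.sum_sub_distrib, ← Finset.sum_mul, hp₁, one_mul, mul_neg,
      Finset.sum_neg_distrib, mul_div_assoc', ← Finset.sum_div]
    ring
  have hrhs : ∑ i, (√(p i) / s - p i) = 0 := by
    rw [Finset.sum_sub_distrib, ← Finset.sum_div, hp₁, div_self hs.ne', sub_self]
  linarith


def coeffMatrix {m k : Type*} (ψ : m × k → ℂ) : Matrix m k ℂ :=
  of (Function.curry ψ)

section

variable {m k : Type*} [Fintype m] [Fintype k]

lemma ptrace2_vecMulVec (ψ : m × k → ℂ) :
    ptrace2 (vecMulVec ψ (star ψ)) = coeffMatrix ψ * (coeffMatrix ψ)ᴴ := by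
  ext i j
  simp [ptrace2, coeffMatrix, mul_apply, vecMulVec_apply]

lemma trace_coeffMatrix_mul_conjTranspose (ψ : m × k → ℂ) :
    (coeffMatrix ψ * (coeffMatrix ψ)ᴴ).trace = star ψ ⬝ᵥ ψ := by
  simp [trace, coeffMatrix, mul_apply, dotProduct, Fintype.sum_prod_type, mul_comm]

lemma conjTranspose_mul_self_ptranspose_vecMulVec (ψ : m × k → ℂ) :
    (ptranspose (vecMulVec ψ (star ψ)))ᴴ * ptranspose (vecMulVec ψ (star ψ))
      = (coeffMatrix ψ * (coeffMatrix ψ)ᴴ)ᵀ ⊗ₖ ((coeffMatrix ψ)ᴴ * coeffMatrix ψ)ᵀ := by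
  ext ⟨i, α⟩ ⟨j, β⟩
  simp only [mul_apply, conjTranspose_apply, ptranspose, vecMulVec_apply, coeffMatrix,
    kroneckerMap_apply, transpose_apply, of_apply, Fintype.sum_prod_type, Function.curry_apply,
    Pi.star_apply, star_mul', star_star, Finset.sum_mul_sum]
  rw [Finset.sum_comm]
  refine Finset.sum_congr rfl fun l _ => Finset.sum_congr rfl fun γ _ => ?_
  ring

lemma traceNorm_ptranspose_vecMulVec [DecidableEq m] [DecidableEq k] (ψ : m × k → ℂ) :
    traceNorm (ptranspose (vecMulVec ψ (star ψ)))
      = (∑ i, √((isHermitian_mul_conjTranspose_self (coeffMatrix ψ)).eigenvalues i)) ^ 2 := by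
  set A := coeffMatrix ψ
  have hρ := isHermitian_mul_conjTranspose_self A
  have hσ := isHermitian_conjTranspose_mul_self A
  have hcharpoly := congrArg charpoly (conjTranspose_mul_self_ptranspose_vecMulVec ψ)
  rw [hρ.transpose.charpoly_kronecker hσ.transpose] at hcharpoly
  rw [traceNorm, IsHermitian.sum_comp_eigenvalues_eq_of_charpoly_eq_prod _ _ hcharpoly,
    Fintype.sum_prod_type]
  rw [hρ.eigenvalues_transpose, hσ.eigenvalues_transpose]
  simp only [Real.sqrt_mul ((posSemidef_self_mul_conjTranspose A).eigenvalues_nonneg _)]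
  rw [← Finset.sum_mul_sum, ← sum_comp_eigenvalues_mul_conjTranspose_self A Real.sqrt_zero, sq]

end

/-- **Lemma 3.7 (Statement 15, Vidal–Werner bound).** For a unit vector
`ψ ∈ ℂ^m ⊗ ℂ^k` with rank-one projection `P = |ψ⟩⟨ψ|`, the von Neumann entropy of the
reduced density matrix `P¹ = Tr_2 P` is bounded by the logarithmic negativity:
`S(P¹) ≤ log ‖P^{T_1}‖₁`. -/
theorem entanglement_entropy_le_log_negativity (m k : ℕ)
    (ψ : Fin m × Fin k → ℂ) (hψ : dotProduct (star ψ) ψ = 1) :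
    vnEntropy (ptrace2 (Matrix.of fun p q : Fin m × Fin k => ψ p *star (ψ q)))
      ≤ Real.log (traceNorm (ptranspose (Matrix.of fun p q : Fin m × Fin k => ψ p * star (ψ q)))) := by
  change vnEntropy (ptrace2 (vecMulVec ψ (star ψ)))
    ≤ Real.log (traceNorm (ptranspose (vecMulVec ψ (star ψ))))
  have hρ := isHermitian_mul_conjTranspose_self (coeffMatrix ψ)
  have htrace : ∑ i, hρ.eigenvalues i = 1 := by
    have := hρ.trace_eq_sum_eigenvalues
    rw [trace_coeffMatrix_mul_conjTranspose, hψ, ← RCLike.ofReal_sum, eq_comm] at this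
    exact RCLike.ofReal_inj.mp (this.trans RCLike.ofReal_one.symm)
  rw [ptrace2_vecMulVec, vnEntropy, dif_pos hρ, traceNorm_ptranspose_vecMulVec, Real.log_pow,
    Nat.cast_ofNat]
  exact neg_sum_mul_log_le_two_mul_log_sum_sqrt
    (posSemidef_self_mul_conjTranspose _).eigenvalues_nonneg htrace
end
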